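/- Let A be of full row rank. Then dom S = ℝ₊ × ℝ^m = ⋃_{F ∈ ℱ} D_F, and for any two distinct nonempty faces F ≠ F' of Y⁰ one has int D_F ∩ D_{F'} = ∅. -/

import Mathlib

open Set

noncomputable section

variable {m n : ℕ}

/-- Euclidean distance between two vectors. -/
def en {k : ℕ} (x x' : Fin k → ℝ) : ℝ := Real.sqrt (∑ i, (x i - x' i) ^ 2)

/-- The ℓ₁ norm. -/
def l1 {k : ℕ} (x : Fin k → ℝ) : ℝ := ∑ i, |x i|

/-- Squared Euclidean norm. -/
def sqnorm {k : ℕ} (y : Fin k → ℝ) : ℝ := ∑ i, (y i) ^ 2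

/-- `A_iᵀ y`, the dot product of the `i`-th column of `A` with `y`. -/
def colDot (A : Matrix (Fin m) (Fin n) ℝ) (i : Fin n) (y : Fin m → ℝ) : ℝ := ∑ k, A k i * y k

/-- The dual feasible set `Y⁰ = {y : ‖Aᵀy‖_∞ ≤ 1}`. -/
def Ydual (A : Matrix (Fin m) (Fin n) ℝ) : Set (Fin m → ℝ) := {y | ∀ i, |colDot A i y| ≤ 1}

/-- `F` is a face of `C`: the argmax set of a linear functional over `C`. -/
def IsFaceOf (C F : Set (Fin m → ℝ)) : Prop :=
  ∃ v : Fin m → ℝ, F = {y | y ∈ C ∧ ∀ z ∈ C, ∑ k, v k * z k ≤ ∑ k, v k * y k}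

/-- `𝒜⁺(F)`. -/
def Aplus (A : Matrix (Fin m) (Fin n) ℝ) (F : Set (Fin m → ℝ)) : Set (Fin n) :=
  {i | ∀ y ∈ F, colDot A i y = 1}

/-- `𝒜⁻(F)`. -/
def Aminus (A : Matrix (Fin m) (Fin n) ℝ) (F : Set (Fin m → ℝ)) : Set (Fin n) :=
  {i | ∀ y ∈ F, colDot A i y = -1}

/-- `𝒜⁰(F)`. -/
def Azero (A : Matrix (Fin m) (Fin n) ℝ) (F : Set (Fin m → ℝ)) : Set (Fin n) :=
  {i | ∃ y ∈ F, -1 < colDot A i y ∧ colDot A i y < 1}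

/-- Solution set of the extended ℓ₁ regularization problem:
basis pursuit when `lam = 0`, Lasso-type problem when `lam > 0`. -/
def Sol (A : Matrix (Fin m) (Fin n) ℝ) (lam : ℝ) (b : Fin m → ℝ) : Set (Fin n → ℝ) :=
  if lam = 0 then
    {x | A.mulVec x = b ∧ ∀ z, A.mulVec z = b → l1 x ≤ l1 z}
  else
    {x | ∀ z, l1 x + 1 / (2 * lam) * sqnorm (A.mulVec x - b) ≤
          l1 z + 1 / (2 * lam) * sqnorm (A.mulVec z - b)}

/-- Graph of the solution multifunction `S`. -/
def gphS (A : Matrix (Fin m) (Fin n) ℝ) : Set (ℝ × (Fin m → ℝ) × (Fin n → ℝ)) :=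
  {p | 0 ≤ p.1 ∧ p.2.2 ∈ Sol A p.1 p.2.1}

/-- `A_iᵀ(b − Ax)`. -/
def resid (A : Matrix (Fin m) (Fin n) ℝ) (b : Fin m → ℝ) (x : Fin n → ℝ) (i : Fin n) : ℝ :=
  colDot A i (b - A.mulVec x)

/-- The polyhedral cone `S_F` associated with a face `F` of `Y⁰`. -/
def SFace (A : Matrix (Fin m) (Fin n) ℝ) (F : Set (Fin m → ℝ)) :
    Set (ℝ × (Fin m → ℝ) × (Fin n → ℝ)) :=
  {p | 0 ≤ p.1 ∧
    (∀ i ∈ Aplus A F, 0 ≤ p.2.2 i ∧ resid A p.2.1 p.2.2 i = p.1) ∧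
    (∀ i ∈ Azero A F, p.2.2 i = 0 ∧ |resid A p.2.1 p.2.2 i| ≤ p.1) ∧
    (∀ i ∈ Aminus A F, p.2.2 i ≤ 0 ∧ resid A p.2.1 p.2.2 i = -p.1)}

/-- `cl W(I⁺, I⁰, I⁻)`. -/
def clW (Ip I0 Im : Set (Fin n)) : Set (Fin n → ℝ) :=
  {x | (∀ i ∈ Ip, 0 ≤ x i) ∧ (∀ i ∈ I0, x i = 0) ∧ (∀ i ∈ Im, x i ≤ 0)}

/-- `W(I⁺, I⁰, I⁻)`. -/
def Wset (Ip I0 Im : Set (Fin n)) : Set (Fin n → ℝ) :=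
  {x | (∀ i ∈ Ip, 0 < x i) ∧ (∀ i ∈ I0, x i = 0) ∧ (∀ i ∈ Im, x i < 0)}

/-- The projection `D_F` of `S_F` onto the `(λ, b)` coordinates. -/
def DFace (A : Matrix (Fin m) (Fin n) ℝ) (F : Set (Fin m → ℝ)) : Set (ℝ × (Fin m → ℝ)) :=
  (fun p => (p.1, p.2.1)) '' SFace A F

/-- The convex subdifferential of the ℓ₁ norm. -/
def l1subdiff {k : ℕ} (x : Fin k → ℝ) : Set (Fin k → ℝ) :=
  {v | ∀ z, l1 x + ∑ i, v i * (z i - x i) ≤ l1 z}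

/-- Polyhedral subset of `ℝ × ℝ^m × ℝ^n`: a finite intersection of closed half-spaces. -/
def IsPolyhedral3 (s : Set (ℝ × (Fin m → ℝ) × (Fin n → ℝ))) : Prop :=
  ∃ (k : ℕ) (a : Fin k → ℝ × (Fin m → ℝ) × (Fin n → ℝ)) (β : Fin k → ℝ),
    s = {p | ∀ j, (a j).1 * p.1 + (∑ t, (a j).2.1 t * p.2.1 t) +
          (∑ t, (a j).2.2 t * p.2.2 t) ≤ β j}

/-- Lipschitz continuity of a set-valued map on a set `X`, with constant `κ`. -/
def LipOn {a b : ℕ} (G : (Fin a → ℝ) → Set (Fin b → ℝ)) (X : Set (Fin a → ℝ)) (κ : ℝ) : Prop :=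
  (∀ x ∈ X, (G x).Nonempty ∧ IsClosed (G x)) ∧
  ∀ x ∈ X, ∀ x' ∈ X, ∀ y' ∈ G x', ∃ y ∈ G x, en y' y ≤ κ * en x' x

end

section BP

open Finset

variable {m n : ℕ}

/-- Euclidean dot product on `Fin k → ℝ`. -/
def dotp {k : ℕ} (u v : Fin k → ℝ) : ℝ := ∑ i, u i * v i

lemma dotp_self_nonneg {k : ℕ} (u : Fin k → ℝ) : 0 ≤ dotp u u :=
  Finset.sum_nonneg fun i _ => mul_self_nonneg _

lemma eq_of_dotp_sub_self {k : ℕ} {u v : Fin k → ℝ} (h : dotp (u - v) (u - v) ≤ 0) : u = v := by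
  have h0 : dotp (u - v) (u - v) = 0 := le_antisymm h (dotp_self_nonneg _)
  funext i
  have := (Finset.sum_eq_zero_iff_of_nonneg (fun i _ => mul_self_nonneg ((u - v) i))).1 h0 i
    (Finset.mem_univ i)
  have : (u i - v i) * (u i - v i) = 0 := by simpa [dotp] using this
  have := mul_self_eq_zero.1 this
  linarith

lemma colDot_add (A : Matrix (Fin m) (Fin n) ℝ) (i : Fin n) (y z : Fin m → ℝ) :
    colDot A i (y + z) = colDot A i y + colDot A i z := by
  simp [colDot, mul_add, Finset.sum_add_distrib]

lemma colDot_smul (A : Matrix (Fin m) (Fin n) ℝ) (i : Fin n) (c : ℝ) (y : Fin m → ℝ) :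
    colDot A i (c • y) = c * colDot A i y := by
  simp only [colDot, Finset.mul_sum, Pi.smul_apply, smul_eq_mul]
  apply Finset.sum_congr rfl; intro k _; ring

lemma colDot_sub (A : Matrix (Fin m) (Fin n) ℝ) (i : Fin n) (y z : Fin m → ℝ) :
    colDot A i (y - z) = colDot A i y - colDot A i z := by
  simp [colDot, mul_sub, Finset.sum_sub_distrib]

lemma colDot_sum (A : Matrix (Fin m) (Fin n) ℝ) (i : Fin n) {ι : Type*} (T : Finset ι)
    (w : ι → Fin m → ℝ) : colDot A i (∑ j ∈ T, w j) = ∑ j ∈ T, colDot A i (w j) := by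
  classical
  induction T using Finset.induction with
  | empty => simp [colDot]
  | insert a s hx ih => simp [Finset.sum_insert hx, colDot_add, ih]

lemma mulVec_apply' (A : Matrix (Fin m) (Fin n) ℝ) (x : Fin n → ℝ) (k : Fin m) :
    A.mulVec x k = ∑ j, A k j * x j := rfl

/-- key sum swap: `⟨Ax, w⟩ = ∑ i, x i * ⟨a_i, w⟩`. -/
lemma dotp_mulVec (A : Matrix (Fin m) (Fin n) ℝ) (x : Fin n → ℝ) (w : Fin m → ℝ) :
    dotp (A.mulVec x) w = ∑ i, x i * colDot A i w := by
  simp only [dotp, mulVec_apply', colDot, Finset.sum_mul, Finset.mul_sum]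
  rw [Finset.sum_comm]
  apply Finset.sum_congr rfl; intro i _
  apply Finset.sum_congr rfl; intro k _; ring

lemma dotp_add_left {k : ℕ} (u v w : Fin k → ℝ) :
    dotp (u + v) w = dotp u w + dotp v w := by
  simp [dotp, add_mul, Finset.sum_add_distrib]

lemma dotp_sub_left {k : ℕ} (u v w : Fin k → ℝ) :
    dotp (u - v) w = dotp u w - dotp v w := by
  simp [dotp, sub_mul, Finset.sum_sub_distrib]

lemma dotp_smul_left {k : ℕ} (c : ℝ) (u w : Fin k → ℝ) :
    dotp (c • u) w = c * dotp u w := by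
  simp only [dotp, Finset.mul_sum, Pi.smul_apply, smul_eq_mul]
  apply Finset.sum_congr rfl; intro j _; ring

lemma dotp_sub_right {k : ℕ} (u v w : Fin k → ℝ) :
    dotp u (v - w) = dotp u v - dotp u w := by
  simp [dotp, mul_sub, Finset.sum_sub_distrib]

/-- scalar helper -/
lemma nonpos_of_small_mul (a C T : ℝ) (hT : 0 < T) (h : ∀ t, 0 < t → t < T → a ≤ C * t) :
    a ≤ 0 := by
  by_contra h0
  push_neg at h0
  rcases le_or_gt C 0 with hC | hC
  · have := h (T / 2) (by linarith) (by linarith)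
    nlinarith
  · have ht1 : (0:ℝ) < min (T / 2) (a / (2 * C)) := by
      apply lt_min (by linarith) (by positivity)
    have := h _ ht1 (lt_of_le_of_lt (min_le_left _ _) (by linarith))
    have h2 : C * min (T / 2) (a / (2 * C)) ≤ C * (a / (2 * C)) :=
      mul_le_mul_of_nonneg_left (min_le_right _ _) hC.le
    have h3 : C * (a / (2 * C)) = a / 2 := by field_simp
    nlinarith

lemma sqnorm_zero_iff {k : ℕ} {y : Fin k → ℝ} (h : sqnorm y ≤ 0) : y = 0 := by
  have h0 : sqnorm y = 0 :=
    le_antisymm h (Finset.sum_nonneg fun i _ => sq_nonneg _)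
  funext i
  have := (Finset.sum_eq_zero_iff_of_nonneg (fun i _ => sq_nonneg (y i))).1 h0 i
    (Finset.mem_univ i)
  simpa [pow_eq_zero_iff] using this

end BP

section MoreDot
variable {k : ℕ}
lemma dotp_add_right (u v w : Fin k → ℝ) : dotp u (v + w) = dotp u v + dotp u w := by
  simp [dotp, mul_add, Finset.sum_add_distrib]

lemma dotp_smul_right (c : ℝ) (u w : Fin k → ℝ) : dotp u (c • w) = c * dotp u w := by
  simp only [dotp, Finset.mul_sum, Pi.smul_apply, smul_eq_mul]
  apply Finset.sum_congr rfl; intro j _; ring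
end MoreDot
section BP2

variable {m n : ℕ} {A : Matrix (Fin m) (Fin n) ℝ} {F : Set (Fin m → ℝ)}

lemma face_subset (h : IsFaceOf (Ydual A) F) : F ⊆ Ydual A := by
  obtain ⟨v, rfl⟩ := h
  intro y hy; exact hy.1

lemma Ydual_combo {a c : ℝ} (ha : 0 ≤ a) (hc : 0 ≤ c) (hac : a + c = 1)
    {y z : Fin m → ℝ} (hy : y ∈ Ydual A) (hz : z ∈ Ydual A) :
    a • y + c • z ∈ Ydual A := by
  intro i
  rw [colDot_add, colDot_smul, colDot_smul]
  calc |a * colDot A i y + c * colDot A i z| ≤ |a * colDot A i y| + |c * colDot A i z| :=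
        abs_add_le _ _
    _ ≤ a * 1 + c * 1 := by
        rw [abs_mul, abs_mul, abs_of_nonneg ha, abs_of_nonneg hc]
        exact add_le_add (mul_le_mul_of_nonneg_left (hy i) ha)
          (mul_le_mul_of_nonneg_left (hz i) hc)
    _ = 1 := by linarith

lemma face_convex (h : IsFaceOf (Ydual A) F) : Convex ℝ F := by
  obtain ⟨v, rfl⟩ := h
  intro y hy z hz a c ha hc hac
  refine ⟨Ydual_combo ha hc hac hy.1 hz.1, fun w hw => ?_⟩
  have h1 := hy.2 w hw
  have h2 := hz.2 w hw
  show dotp v w ≤ dotp v (a • y + c • z)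
  rw [dotp_add_right, dotp_smul_right, dotp_smul_right]
  have h1' : dotp v w ≤ dotp v y := h1
  have h2' : dotp v w ≤ dotp v z := h2
  calc dotp v w = a * dotp v w + c * dotp v w := by rw [← add_mul, hac, one_mul]
    _ ≤ a * dotp v y + c * dotp v z :=
        add_le_add (mul_le_mul_of_nonneg_left h1' ha) (mul_le_mul_of_nonneg_left h2' hc)

/-- For a nonempty face, every index is in one of the three classes. -/
lemma face_cover (h : IsFaceOf (Ydual A) F) (hne : F.Nonempty) (i : Fin n) :
    i ∈ Aplus A F ∨ i ∈ Azero A F ∨ i ∈ Aminus A F := by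
  by_cases h0 : ∃ y ∈ F, -1 < colDot A i y ∧ colDot A i y < 1
  · exact Or.inr (Or.inl h0)
  push_neg at h0
  have hval : ∀ y ∈ F, colDot A i y = 1 ∨ colDot A i y = -1 := by
    intro y hy
    have hY := face_subset h hy i
    rcases abs_le.1 hY with ⟨h1, h2⟩
    rcases eq_or_lt_of_le h2 with he | hl
    · exact Or.inl he
    rcases eq_or_lt_of_le h1 with he | hg
    · exact Or.inr he.symm
    exact absurd (h0 y hy hg) (not_le.2 hl)
  by_cases hp : ∀ y ∈ F, colDot A i y = 1
  · exact Or.inl hp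
  push_neg at hp
  obtain ⟨y₂, hy₂, hne2⟩ := hp
  have hy₂v : colDot A i y₂ = -1 := (hval y₂ hy₂).resolve_left hne2
  by_cases hm : ∀ y ∈ F, colDot A i y = -1
  · exact Or.inr (Or.inr hm)
  push_neg at hm
  obtain ⟨y₁, hy₁, hne1⟩ := hm
  have hy₁v : colDot A i y₁ = 1 := (hval y₁ hy₁).resolve_right hne1
  -- midpoint
  have hmid : (2⁻¹ : ℝ) • y₁ + (2⁻¹ : ℝ) • y₂ ∈ F := by
    have := face_convex h hy₁ hy₂ (by norm_num : (0:ℝ) ≤ 2⁻¹) (by norm_num : (0:ℝ) ≤ 2⁻¹)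
      (by norm_num)
    exact this
  refine Or.inr (Or.inl ⟨_, hmid, ?_⟩)
  rw [colDot_add, colDot_smul, colDot_smul, hy₁v, hy₂v]
  norm_num

lemma not_aplus_azero {i : Fin n} (hp : i ∈ Aplus A F) (h0 : i ∈ Azero A F) : False := by
  obtain ⟨y, hy, h1, h2⟩ := h0
  have := hp y hy
  linarith

lemma not_aminus_azero {i : Fin n} (hp : i ∈ Aminus A F) (h0 : i ∈ Azero A F) : False := by
  obtain ⟨y, hy, h1, h2⟩ := h0
  have := hp y hy
  linarith

/-- A nonempty face equals the set cut out by its active constraints. -/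
lemma face_eq_hat (h : IsFaceOf (Ydual A) F) (hne : F.Nonempty) :
    F = {z | z ∈ Ydual A ∧ (∀ i ∈ Aplus A F, colDot A i z = 1) ∧
      (∀ i ∈ Aminus A F, colDot A i z = -1)} := by
  classical
  obtain ⟨v, hv⟩ := h
  have hFY : F ⊆ Ydual A := face_subset ⟨v, hv⟩
  apply Set.Subset.antisymm
  · intro z hz
    exact ⟨hFY hz, fun i hi => hi z hz, fun i hi => hi z hz⟩
  -- construct a point ŷ ∈ F with strict inequalities on Azero F
  obtain ⟨y₀, hy₀⟩ := hne
  set T : Finset (Fin n) := Finset.univ.filter (fun i => i ∈ Azero A F) with hT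
  have hwit : ∀ i ∈ T, ∃ w ∈ F, -1 < colDot A i w ∧ colDot A i w < 1 := by
    intro i hi
    exact (Finset.mem_filter.1 hi).2
  choose w hwF hw1 hw2 using hwit
  by_cases hTne : T.Nonempty
  · -- centroid
    set K : ℝ := (T.card : ℝ) with hK
    have hKpos : 0 < K := by
      simp only [hK]
      exact_mod_cast Finset.card_pos.2 hTne
    have hK0 : K ≠ 0 := ne_of_gt hKpos
    have hKcard : K = (T.card : ℝ) := hK
    clear_value K
    set yhat : Fin m → ℝ := K⁻¹ • ∑ j ∈ T.attach, w j j.2 with hyhat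
    clear_value yhat
    have hyhatF : yhat ∈ F := by
      have := (face_convex ⟨v, hv⟩).sum_mem (t := T.attach)
        (w := fun _ => K⁻¹) (z := fun j => w j j.2)
        (fun _ _ => le_of_lt (inv_pos.2 hKpos))
        (by rw [Finset.sum_const, Finset.card_attach, nsmul_eq_mul, ← hKcard,
              mul_inv_cancel₀ hK0])
        (fun j _ => hwF j j.2)
      rw [hyhat, Finset.smul_sum]
      exact this
    have hstrict : ∀ i ∈ T, -1 < colDot A i yhat ∧ colDot A i yhat < 1 := by
      intro i hi
      have hcd : colDot A i yhat = K⁻¹ * ∑ j ∈ T.attach, colDot A i (w j j.2) := by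
        rw [hyhat, colDot_smul, colDot_sum]
      have hub : ∀ j ∈ T.attach, colDot A i (w j j.2) ≤ 1 := fun j _ =>
        (abs_le.1 (hFY (hwF j j.2) i)).2
      have hlb : ∀ j ∈ T.attach, -1 ≤ colDot A i (w j j.2) := fun j _ =>
        (abs_le.1 (hFY (hwF j j.2) i)).1
      have hiT : (⟨i, hi⟩ : {x // x ∈ T}) ∈ T.attach := Finset.mem_attach _ _
      constructor
      · have hlt : ∑ j ∈ T.attach, (-1 : ℝ) < ∑ j ∈ T.attach, colDot A i (w j j.2) :=
          Finset.sum_lt_sum hlb ⟨⟨i, hi⟩, hiT, hw1 i hi⟩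
        have : -K < ∑ j ∈ T.attach, colDot A i (w j j.2) := by
          simpa [hK, Finset.card_attach] using hlt
        rw [hcd]
        rw [show (-1 : ℝ) = K⁻¹ * (-K) by rw [mul_neg, inv_mul_cancel₀ hK0]]
        exact mul_lt_mul_of_pos_left this (inv_pos.2 hKpos)
      · have hlt : ∑ j ∈ T.attach, colDot A i (w j j.2) < ∑ j ∈ T.attach, (1 : ℝ) :=
          Finset.sum_lt_sum hub ⟨⟨i, hi⟩, hiT, hw2 i hi⟩
        have : ∑ j ∈ T.attach, colDot A i (w j j.2) < K := by
          simpa [hK, Finset.card_attach] using hlt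
        rw [hcd]
        rw [show (1 : ℝ) = K⁻¹ * K from (inv_mul_cancel₀ hK0).symm]
        exact mul_lt_mul_of_pos_left this (inv_pos.2 hKpos)
    -- epsilon
    set eps : ℝ := 2⁻¹ * T.inf' hTne (fun i => 1 - |colDot A i yhat|) with heps
    clear_value eps
    have hepspos : 0 < eps := by
      rw [heps]
      have : 0 < T.inf' hTne (fun i => 1 - |colDot A i yhat|) := by
        rw [Finset.lt_inf'_iff]
        intro i hi
        have := hstrict i hi
        rw [sub_pos, abs_lt]
        exact ⟨by linarith [this.1], this.2⟩
      linarith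
    intro z hz
    obtain ⟨hzY, hzp, hzm⟩ := hz
    -- u = yhat + eps (yhat - z)
    set u : Fin m → ℝ := yhat + eps • (yhat - z) with hu
    clear_value u
    have huY : u ∈ Ydual A := by
      intro i
      have hcd : colDot A i u = colDot A i yhat + eps * (colDot A i yhat - colDot A i z) := by
        rw [hu, colDot_add, colDot_smul, colDot_sub]
      rcases face_cover ⟨v, hv⟩ ⟨y₀, hy₀⟩ i with hcase | hcase | hcase
      · rw [hcd, hcase yhat hyhatF, hzp i hcase]; norm_num
      · have hiT : i ∈ T := by simp [hT, hcase]
        have hinf : eps ≤ 2⁻¹ * (1 - |colDot A i yhat|) := by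
          rw [heps]
          have := Finset.inf'_le (fun i => 1 - |colDot A i yhat|) hiT
          linarith
        have hzb := abs_le.1 (hzY i)
        have hyb := abs_le.1 (hFY hyhatF i)
        rw [hcd]
        have h1 : |colDot A i yhat + eps * (colDot A i yhat - colDot A i z)| ≤
            |colDot A i yhat| + eps * |colDot A i yhat - colDot A i z| := by
          calc _ ≤ |colDot A i yhat| + |eps * (colDot A i yhat - colDot A i z)| := abs_add_le _ _
            _ = _ := by rw [abs_mul, abs_of_pos hepspos]
        have h2 : |colDot A i yhat - colDot A i z| ≤ 2 := by
          rw [abs_sub_le_iff]; constructor <;> linarith [abs_le.1 (hzY i), abs_le.1 (hFY hyhatF i)]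
        have h3 : |colDot A i yhat| ≤ 1 - 2 * eps := by linarith
        nlinarith [abs_nonneg (colDot A i yhat - colDot A i z)]
      · rw [hcd, hcase yhat hyhatF, hzm i hcase]; norm_num
    -- optimality transfer
    have hyopt : ∀ w' ∈ Ydual A, ∑ k, v k * w' k ≤ ∑ k, v k * yhat k := by
      have := hyhatF
      rw [hv] at this
      exact this.2
    have hvu : ∑ k, v k * u k ≤ ∑ k, v k * yhat k := hyopt u huY
    have hexp : dotp v u = (1 + eps) * dotp v yhat - eps * dotp v z := by
      rw [hu, dotp_add_right, dotp_smul_right, dotp_sub_right]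
      ring
    have hvu' : dotp v u ≤ dotp v yhat := hvu
    have hzopt : ∑ k, v k * yhat k ≤ ∑ k, v k * z k := by
      show dotp v yhat ≤ dotp v z
      nlinarith
    rw [hv]
    exact ⟨hzY, fun w' hw' => le_trans (hyopt w' hw') hzopt⟩
  · -- Azero F empty: every index is plus or minus
    intro z hz
    obtain ⟨hzY, hzp, hzm⟩ := hz
    have hcover : ∀ i : Fin n, i ∈ Aplus A F ∨ i ∈ Aminus A F := by
      intro i
      rcases face_cover ⟨v, hv⟩ ⟨y₀, hy₀⟩ i with hc | hc | hc
      · exact Or.inl hc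
      · exact absurd (by simp [hT, hc] : i ∈ T) (by simp [Finset.not_nonempty_iff_eq_empty.1 hTne])
      · exact Or.inr hc
    set u : Fin m → ℝ := y₀ + (1:ℝ) • (y₀ - z) with hu
    clear_value u
    have huY : u ∈ Ydual A := by
      intro i
      have hcd : colDot A i u = colDot A i y₀ + 1 * (colDot A i y₀ - colDot A i z) := by
        rw [hu, colDot_add, colDot_smul, colDot_sub]
      rcases hcover i with hc | hc
      · rw [hcd, hc y₀ hy₀, hzp i hc]; norm_num
      · rw [hcd, hc y₀ hy₀, hzm i hc]; norm_num
    have hyopt : ∀ w' ∈ Ydual A, ∑ k, v k * w' k ≤ ∑ k, v k * y₀ k := by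
      have := hy₀; rw [hv] at this; exact this.2
    have hvu : ∑ k, v k * u k ≤ ∑ k, v k * y₀ k := hyopt u huY
    have hexp : dotp v u = 2 * dotp v y₀ - dotp v z := by
      rw [hu, dotp_add_right, dotp_smul_right, dotp_sub_right]
      ring
    have hvu' : dotp v u ≤ dotp v y₀ := hvu
    have hzopt : ∑ k, v k * y₀ k ≤ ∑ k, v k * z k := by
      show dotp v y₀ ≤ dotp v z
      linarith
    rw [hv]
    exact ⟨hzY, fun w' hw' => le_trans (hyopt w' hw') hzopt⟩

end BP2
section BP3

variable {m n : ℕ} {A : Matrix (Fin m) (Fin n) ℝ}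

lemma dotp_comm {k : ℕ} (u v : Fin k → ℝ) : dotp u v = dotp v u := by
  simp [dotp, mul_comm]

lemma sqnorm_add {k : ℕ} (u v : Fin k → ℝ) :
    sqnorm (u + v) = sqnorm u + 2 * dotp u v + sqnorm v := by
  simp only [sqnorm, dotp, Pi.add_apply, Finset.mul_sum, ← Finset.sum_add_distrib]
  apply Finset.sum_congr rfl; intro i _; ring

lemma sqnorm_smul {k : ℕ} (t : ℝ) (v : Fin k → ℝ) : sqnorm (t • v) = t^2 * sqnorm v := by
  simp only [sqnorm, Pi.smul_apply, smul_eq_mul, Finset.mul_sum]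
  apply Finset.sum_congr rfl; intro i _; ring

lemma sqnorm_nonneg {k : ℕ} (u : Fin k → ℝ) : 0 ≤ sqnorm u :=
  Finset.sum_nonneg fun i _ => sq_nonneg _

lemma mulVec_add_single (x : Fin n → ℝ) (i : Fin n) (t : ℝ) :
    A.mulVec (x + Pi.single i t) = A.mulVec x + t • (fun k => A k i) := by
  classical
  funext k
  simp only [mulVec_apply', Pi.add_apply, Pi.smul_apply, smul_eq_mul, mul_add,
    Finset.sum_add_distrib]
  congr 1
  have key : ∀ j, A k j * (Pi.single i t : Fin n → ℝ) j = if j = i then A k j * t else 0 := by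
    intro j
    rw [Pi.single_apply]
    split <;> simp
  rw [Finset.sum_congr rfl fun j _ => key j,
    Finset.sum_ite_eq' Finset.univ i (fun j => A k j * t)]
  simp [mul_comm]

lemma l1_add_single (x : Fin n → ℝ) (i : Fin n) (t : ℝ) :
    l1 (x + Pi.single i t) = l1 x - |x i| + |x i + t| := by
  classical
  simp only [l1, Pi.add_apply]
  have key : ∀ j, |x j + (Pi.single i t : Fin n → ℝ) j| = |x j| + (if j = i then |x i + t| - |x i| else 0) := by
    intro j
    rw [Pi.single_apply]
    by_cases h : j = i
    · subst h; simp
    · simp [h]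
  rw [Finset.sum_congr rfl fun j _ => key j, Finset.sum_add_distrib,
    Finset.sum_ite_eq' Finset.univ i (fun _ => |x i + t| - |x i|)]
  simp
  ring

lemma dotp_col_resid (b : Fin m → ℝ) (x : Fin n → ℝ) (i : Fin n) :
    dotp (A.mulVec x - b) (fun k => A k i) = -(resid A b x i) := by
  simp only [dotp, resid, colDot, Pi.sub_apply, ← Finset.sum_neg_distrib]
  apply Finset.sum_congr rfl; intro k _; ring

lemma sol_iff_pos {lam : ℝ} (hl : 0 < lam) (b : Fin m → ℝ) (x : Fin n → ℝ) :
    x ∈ Sol A lam b ↔ ∀ z, l1 x + 1 / (2 * lam) * sqnorm (A.mulVec x - b) ≤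
      l1 z + 1 / (2 * lam) * sqnorm (A.mulVec z - b) := by
  rw [Sol, if_neg (ne_of_gt hl)]
  rfl

/-- Master inequality from optimality. -/
lemma sol_master {lam : ℝ} (hl : 0 < lam) {b : Fin m → ℝ} {x : Fin n → ℝ}
    (hx : x ∈ Sol A lam b) (i : Fin n) (t : ℝ) :
    -(2*lam) * (|x i + t| - |x i|) ≤
      t^2 * sqnorm (fun k => A k i) - 2*t*(resid A b x i) := by
  have h := (sol_iff_pos hl b x).1 hx (x + Pi.single i t)
  set c := 1 / (2 * lam) with hc
  set Ki := sqnorm (fun k => A k i) with hKi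
  set r := resid A b x i with hr
  have hAz : A.mulVec (x + Pi.single i t) - b = (A.mulVec x - b) + t • (fun k => A k i) := by
    rw [mulVec_add_single]; abel
  rw [l1_add_single, hAz, sqnorm_add, dotp_smul_right, sqnorm_smul, dotp_col_resid] at h
  have hc1 : 2 * lam * c = 1 := by rw [hc]; field_simp
  have hQ : c * (sqnorm (A.mulVec x - b) + 2 * (t * -r) + t ^ 2 * Ki)
      = c * sqnorm (A.mulVec x - b) + c * (2*(t * -r)) + c * (t^2*Ki) := by ring
  rw [hQ] at h
  have h2 : c * (2*t*r - t^2*Ki) ≤ |x i + t| - |x i| := by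
    have : c * (2*(t * -r)) + c * (t^2 * Ki) = - (c * (2*t*r - t^2*Ki)) := by ring
    linarith
  have h3 := mul_le_mul_of_nonneg_left h2 (by linarith : (0:ℝ) ≤ 2*lam)
  have h4 : 2*lam*(c * (2*t*r - t^2*Ki)) = 2*t*r - t^2*Ki := by
    rw [← mul_assoc, hc1, one_mul]
  rw [h4] at h3
  linarith

lemma kkt_abs {lam : ℝ} (hl : 0 < lam) {b : Fin m → ℝ} {x : Fin n → ℝ}
    (hx : x ∈ Sol A lam b) (i : Fin n) : |resid A b x i| ≤ lam := by
  set Ki := sqnorm (fun k => A k i) with hKi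
  have hKi0 : 0 ≤ Ki := sqnorm_nonneg _
  set r := resid A b x i with hr
  rw [abs_le]
  constructor
  · -- -lam ≤ r : use t < 0, i.e. plug -t
    have key : (2:ℝ) * (-r) - 2*lam ≤ 0 := by
      apply nonpos_of_small_mul _ Ki 1 one_pos
      intro t ht ht1
      have hm := sol_master hl hx i (-t)
      have habs : |x i + -t| - |x i| ≤ t := by
        have h0 : |x i + -t| - |x i| ≤ |x i + -t - x i| := abs_sub_abs_le_abs_sub _ _
        have h7 : |x i + -t - x i| = t := by
          rw [add_sub_cancel_left, abs_neg, abs_of_pos ht]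
        linarith
      have h5 : -(2*lam)*t ≤ t^2*Ki + 2*t*r := by nlinarith
      have h6 : t * (2*(-r) - 2*lam) ≤ t * (Ki * t) := by nlinarith
      exact le_of_mul_le_mul_left h6 ht
    linarith
  · have key : (2:ℝ) * r - 2*lam ≤ 0 := by
      apply nonpos_of_small_mul _ Ki 1 one_pos
      intro t ht ht1
      have hm := sol_master hl hx i t
      have habs : |x i + t| - |x i| ≤ t := by
        have h0 : |x i + t| - |x i| ≤ |x i + t - x i| := abs_sub_abs_le_abs_sub _ _
        have h7 : |x i + t - x i| = t := by
          rw [add_sub_cancel_left, abs_of_pos ht]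
        linarith
      have h5 : -(2*lam)*t ≤ t^2*Ki - 2*t*r := by nlinarith
      have h6 : t * (2*r - 2*lam) ≤ t * (Ki * t) := by nlinarith
      exact le_of_mul_le_mul_left h6 ht
    linarith

lemma kkt_pos {lam : ℝ} (hl : 0 < lam) {b : Fin m → ℝ} {x : Fin n → ℝ}
    (hx : x ∈ Sol A lam b) {i : Fin n} (hxi : 0 < x i) : resid A b x i = lam := by
  set Ki := sqnorm (fun k => A k i) with hKi
  have hKi0 : 0 ≤ Ki := sqnorm_nonneg _
  set r := resid A b x i with hr
  have hub : r ≤ lam := (abs_le.1 (kkt_abs hl hx i)).2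
  have key : 2*lam - 2*r ≤ 0 := by
    apply nonpos_of_small_mul _ Ki (x i) hxi
    intro t ht htT
    have hm := sol_master hl hx i (-t)
    have habs : |x i + -t| - |x i| = -t := by
      rw [abs_of_pos hxi, abs_of_pos (by linarith : 0 < x i + -t)]
      ring
    rw [habs] at hm
    have h6 : t * (2*lam - 2*r) ≤ t * (Ki * t) := by nlinarith
    exact le_of_mul_le_mul_left h6 ht
  linarith

lemma kkt_neg {lam : ℝ} (hl : 0 < lam) {b : Fin m → ℝ} {x : Fin n → ℝ}
    (hx : x ∈ Sol A lam b) {i : Fin n} (hxi : x i < 0) : resid A b x i = -lam := by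
  set Ki := sqnorm (fun k => A k i) with hKi
  have hKi0 : 0 ≤ Ki := sqnorm_nonneg _
  set r := resid A b x i with hr
  have hlb : -lam ≤ r := (abs_le.1 (kkt_abs hl hx i)).1
  have key : 2*lam + 2*r ≤ 0 := by
    apply nonpos_of_small_mul _ Ki (-(x i)) (by linarith)
    intro t ht htT
    have hm := sol_master hl hx i t
    have habs : |x i + t| - |x i| = -t := by
      rw [abs_of_neg hxi, abs_of_neg (by linarith : x i + t < 0)]
      ring
    rw [habs] at hm
    have h6 : t * (2*lam + 2*r) ≤ t * (Ki * t) := by nlinarith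
    exact le_of_mul_le_mul_left h6 ht
  linarith

/-- Sufficient optimality conditions, `lam > 0`. -/
lemma sol_suff {lam : ℝ} (hl : 0 < lam) {b : Fin m → ℝ} {x : Fin n → ℝ}
    (habs : ∀ i, |resid A b x i| ≤ lam)
    (hsign : ∀ i, x i * resid A b x i = lam * |x i|) :
    x ∈ Sol A lam b := by
  rw [sol_iff_pos hl]
  intro z
  set c := 1 / (2 * lam) with hc
  have hcpos : 0 < c := by rw [hc]; positivity
  have hc1 : 2 * c * lam = 1 := by rw [hc]; field_simp
  have hAz : A.mulVec z - b = (A.mulVec x - b) + A.mulVec (z - x) := by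
    funext k
    simp only [Pi.sub_apply, Pi.add_apply, mulVec_apply', mul_sub, Finset.sum_sub_distrib]
    ring
  rw [hAz, sqnorm_add]
  have hD : dotp (A.mulVec x - b) (A.mulVec (z - x)) =
      ∑ i, x i * resid A b x i - ∑ i, z i * resid A b x i := by
    rw [dotp_comm, dotp_mulVec]
    simp only [Pi.sub_apply, sub_mul, Finset.sum_sub_distrib]
    have : ∀ w : Fin n → ℝ, ∑ i, w i * colDot A i (A.mulVec x - b)
        = -∑ i, w i * resid A b x i := by
      intro w
      rw [← Finset.sum_neg_distrib]
      apply Finset.sum_congr rfl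
      intro i _
      have : colDot A i (A.mulVec x - b) = -(resid A b x i) := by
        rw [resid, colDot_sub, colDot_sub]
        ring
      rw [this]; ring
    rw [this z, this x]
    ring
  have hzr : ∑ i, z i * resid A b x i ≤ lam * l1 z := by
    rw [l1, Finset.mul_sum]
    apply Finset.sum_le_sum
    intro i _
    calc z i * resid A b x i ≤ |z i * resid A b x i| := le_abs_self _
      _ = |z i| * |resid A b x i| := abs_mul _ _
      _ ≤ |z i| * lam := mul_le_mul_of_nonneg_left (habs i) (abs_nonneg _)
      _ = lam * |z i| := mul_comm _ _
  have hxr : ∑ i, x i * resid A b x i = lam * l1 x := by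
    rw [l1, Finset.mul_sum]
    exact Finset.sum_congr rfl fun i _ => hsign i
  have hS : 0 ≤ sqnorm (A.mulVec (z - x)) := sqnorm_nonneg _
  -- f z - f x = (l1 z - l1 x) + c*(S + 2*D) where D = dotp...
  have hD2 : lam * l1 x - lam * l1 z ≤ dotp (A.mulVec x - b) (A.mulVec (z - x)) := by
    rw [hD, hxr]; linarith
  have h2cD := mul_le_mul_of_nonneg_left hD2 (by linarith : (0:ℝ) ≤ 2*c)
  have hfin : 2*c*(lam * l1 x - lam * l1 z) = l1 x - l1 z := by
    have : 2*c*(lam * l1 x - lam * l1 z) = (2*c*lam) * (l1 x - l1 z) := by ring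
    rw [this, hc1, one_mul]
  rw [hfin] at h2cD
  have hexp : c * (sqnorm (A.mulVec x - b) +
      2 * dotp (A.mulVec x - b) (A.mulVec (z - x)) + sqnorm (A.mulVec (z-x)))
      = c * sqnorm (A.mulVec x - b) + 2*c*dotp (A.mulVec x - b) (A.mulVec (z - x))
        + c * sqnorm (A.mulVec (z-x)) := by ring
  rw [hexp]
  nlinarith [mul_le_mul_of_nonneg_left hS hcpos.le]

/-- Sufficient optimality conditions, `lam = 0`. -/
lemma sol_suff_zero {b : Fin m → ℝ} {x : Fin n → ℝ} {y : Fin m → ℝ}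
    (hxb : A.mulVec x = b)
    (habs : ∀ i, |colDot A i y| ≤ 1)
    (hsign : ∀ i, x i * colDot A i y = |x i|) :
    x ∈ Sol A 0 b := by
  rw [Sol, if_pos rfl]
  refine ⟨hxb, fun z hz => ?_⟩
  have hx1 : l1 x = ∑ i, x i * colDot A i y := by
    rw [l1]; exact Finset.sum_congr rfl fun i _ => (hsign i).symm
  have hswap : ∀ w : Fin n → ℝ, ∑ i, w i * colDot A i y = dotp (A.mulVec w) y := by
    intro w; rw [dotp_mulVec]
  have hxz : ∑ i, x i * colDot A i y = ∑ i, z i * colDot A i y := by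
    rw [hswap, hswap, hxb, hz]
  rw [hx1, hxz]
  rw [l1]
  apply Finset.sum_le_sum
  intro i _
  calc z i * colDot A i y ≤ |z i * colDot A i y| := le_abs_self _
    _ = |z i| * |colDot A i y| := abs_mul _ _
    _ ≤ |z i| * 1 := mul_le_mul_of_nonneg_left (habs i) (abs_nonneg _)
    _ = |z i| := mul_one _

end BP3
section BP4

variable {m n : ℕ} {A : Matrix (Fin m) (Fin n) ℝ}

lemma l1_continuous : Continuous (l1 : (Fin n → ℝ) → ℝ) := by
  unfold l1
  exact continuous_finset_sum _ fun i _ => (continuous_apply i).abs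

lemma l1_nonneg (x : Fin n → ℝ) : 0 ≤ l1 x :=
  Finset.sum_nonneg fun i _ => abs_nonneg _

lemma abs_le_l1 (x : Fin n → ℝ) (i : Fin n) : |x i| ≤ l1 x :=
  Finset.single_le_sum (fun j _ => abs_nonneg (x j)) (Finset.mem_univ i)

lemma sublevel_compact (c : ℝ) : IsCompact {x : Fin n → ℝ | l1 x ≤ c} := by
  apply IsCompact.of_isClosed_subset (isCompact_closedBall (0 : Fin n → ℝ) |c|)
  · exact isClosed_le l1_continuous continuous_const
  · intro x hx
    simp only [Metric.mem_closedBall]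
    rw [dist_pi_le_iff (abs_nonneg c)]
    intro i
    rw [Real.dist_eq, Pi.zero_apply, sub_zero]
    exact le_trans (abs_le_l1 x i) (le_trans hx (le_abs_self c))

lemma mulVec_coord_continuous (A : Matrix (Fin m) (Fin n) ℝ) (k : Fin m) :
    Continuous (fun x : Fin n → ℝ => A.mulVec x k) := by
  simp only [mulVec_apply']
  exact continuous_finset_sum _ fun j _ => continuous_const.mul (continuous_apply j)

lemma sqnorm_residual_continuous (A : Matrix (Fin m) (Fin n) ℝ) (b : Fin m → ℝ) :
    Continuous (fun x : Fin n → ℝ => sqnorm (A.mulVec x - b)) := by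
  unfold sqnorm
  apply continuous_finset_sum
  intro k _
  have : (fun x : Fin n → ℝ => (A.mulVec x - b) k ^ 2)
      = fun x : Fin n → ℝ => (A.mulVec x k - b k) ^ 2 := rfl
  rw [this]
  exact ((mulVec_coord_continuous A k).sub continuous_const).pow 2

lemma sol_nonempty_pos {lam : ℝ} (hl : 0 < lam) (b : Fin m → ℝ) :
    (Sol A lam b).Nonempty := by
  set f : (Fin n → ℝ) → ℝ :=
    fun x => l1 x + 1 / (2 * lam) * sqnorm (A.mulVec x - b) with hf
  have hcont : Continuous f := by
    apply l1_continuous.add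
    exact continuous_const.mul (sqnorm_residual_continuous A b)
  have hle : ∀ x, l1 x ≤ f x := by
    intro x
    have h1 : 0 ≤ 1 / (2 * lam) * sqnorm (A.mulVec x - b) := by
      have := sqnorm_nonneg (A.mulVec x - b)
      positivity
    simp only [hf]; linarith
  have h0K : (0 : Fin n → ℝ) ∈ {x : Fin n → ℝ | l1 x ≤ f 0} := by
    simp only [Set.mem_setOf_eq]
    exact hle 0
  obtain ⟨x, hxK, hmin⟩ := (sublevel_compact (f 0)).exists_isMinOn ⟨0, h0K⟩
    hcont.continuousOn
  refine ⟨x, (sol_iff_pos hl b x).2 fun z => ?_⟩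
  by_cases hz : l1 z ≤ f 0
  · exact hmin hz
  · push_neg at hz
    calc f x ≤ f 0 := hmin h0K
      _ ≤ l1 z := le_of_lt hz
      _ ≤ f z := hle z

lemma rank_surjective (hrank : A.rank = m) (b : Fin m → ℝ) : ∃ x, A.mulVec x = b := by
  have htop : LinearMap.range A.mulVecLin = ⊤ := by
    apply Submodule.eq_top_of_finrank_eq
    rw [show Module.finrank ℝ ↥(LinearMap.range A.mulVecLin) = A.rank from rfl, hrank,
      Module.finrank_pi, Fintype.card_fin]
  obtain ⟨x, hx⟩ := LinearMap.range_eq_top.1 htop b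
  exact ⟨x, hx⟩

lemma sol_nonempty_zero (hrank : A.rank = m) (b : Fin m → ℝ) :
    (Sol A 0 b).Nonempty := by
  obtain ⟨x₀, hx₀⟩ := rank_surjective hrank b
  have hmc : Continuous (fun x : Fin n → ℝ => A.mulVec x) :=
    continuous_pi fun k => mulVec_coord_continuous A k
  set K : Set (Fin n → ℝ) := {x | A.mulVec x = b ∧ l1 x ≤ l1 x₀} with hK
  have hKc : IsCompact K := by
    apply IsCompact.of_isClosed_subset (sublevel_compact (l1 x₀))
    · exact (isClosed_eq hmc continuous_const).inter (isClosed_le l1_continuous continuous_const)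
    · intro x hx; exact hx.2
  have hKne : K.Nonempty := ⟨x₀, hx₀, le_refl _⟩
  obtain ⟨x, hxK, hmin⟩ := hKc.exists_isMinOn hKne l1_continuous.continuousOn
  refine ⟨x, ?_⟩
  rw [Sol, if_pos rfl]
  refine ⟨hxK.1, fun z hz => ?_⟩
  by_cases hzl : l1 z ≤ l1 x₀
  · exact hmin (⟨hz, hzl⟩ : z ∈ K)
  · push_neg at hzl
    exact le_trans (hmin (⟨hx₀, le_refl _⟩ : x₀ ∈ K)) (le_of_lt hzl)

end BP4
section BP5

variable {m n : ℕ} {A : Matrix (Fin m) (Fin n) ℝ}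

lemma face_from_dual (y₀ : Fin m → ℝ) (hy₀ : y₀ ∈ Ydual A) :
    ∃ F : Set (Fin m → ℝ), IsFaceOf (Ydual A) F ∧
      (∀ w ∈ Ydual A, (∀ i, colDot A i y₀ = 1 → colDot A i w = 1) →
        (∀ i, colDot A i y₀ = -1 → colDot A i w = -1) → w ∈ F) ∧
      (∀ w ∈ F, ∀ i, (colDot A i y₀ = 1 → colDot A i w = 1) ∧
        (colDot A i y₀ = -1 → colDot A i w = -1)) := by
  classical
  set Pf := Finset.univ.filter (fun i => colDot A i y₀ = 1) with hPf
  set Mf := Finset.univ.filter (fun i => colDot A i y₀ = -1) with hMf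
  set v : Fin m → ℝ := (fun k => (∑ i ∈ Pf, A k i) - ∑ i ∈ Mf, A k i) with hv
  have hdot : ∀ w : Fin m → ℝ,
      dotp v w = (∑ i ∈ Pf, colDot A i w) - ∑ i ∈ Mf, colDot A i w := by
    intro w
    simp only [dotp, hv, sub_mul, Finset.sum_sub_distrib, Finset.sum_mul]
    rw [Finset.sum_comm, Finset.sum_comm (s := Finset.univ) (t := Mf)]
    simp [colDot]
  have hPle : ∀ w ∈ Ydual A, ∀ i ∈ Pf, colDot A i w ≤ 1 := by
    intro w hw i _
    exact (abs_le.1 (hw i)).2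
  have hMle : ∀ w ∈ Ydual A, ∀ i ∈ Mf, -1 ≤ colDot A i w := by
    intro w hw i _
    exact (abs_le.1 (hw i)).1
  have hbound : ∀ w ∈ Ydual A, dotp v w ≤ (Pf.card : ℝ) + Mf.card := by
    intro w hw
    rw [hdot]
    have h1 : ∑ i ∈ Pf, colDot A i w ≤ (Pf.card : ℝ) := by
      calc ∑ i ∈ Pf, colDot A i w ≤ ∑ i ∈ Pf, (1:ℝ) := Finset.sum_le_sum (hPle w hw)
        _ = (Pf.card : ℝ) := by simp
    have h2 : -(Mf.card : ℝ) ≤ ∑ i ∈ Mf, colDot A i w := by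
      calc -(Mf.card : ℝ) = ∑ i ∈ Mf, (-1:ℝ) := by simp
        _ ≤ ∑ i ∈ Mf, colDot A i w := Finset.sum_le_sum (hMle w hw)
    linarith
  have heq : ∀ w : Fin m → ℝ, (∀ i ∈ Pf, colDot A i w = 1) → (∀ i ∈ Mf, colDot A i w = -1) →
      dotp v w = (Pf.card : ℝ) + Mf.card := by
    intro w h1 h2
    rw [hdot, Finset.sum_congr rfl h1, Finset.sum_congr rfl h2]
    simp
  have hy₀P : ∀ i ∈ Pf, colDot A i y₀ = 1 := by
    intro i hi; exact (Finset.mem_filter.1 hi).2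
  have hy₀M : ∀ i ∈ Mf, colDot A i y₀ = -1 := by
    intro i hi; exact (Finset.mem_filter.1 hi).2
  have hy₀v : dotp v y₀ = (Pf.card : ℝ) + Mf.card := heq y₀ hy₀P hy₀M
  refine ⟨{y | y ∈ Ydual A ∧ ∀ z ∈ Ydual A, ∑ k, v k * z k ≤ ∑ k, v k * y k},
    ⟨v, rfl⟩, ?_, ?_⟩
  · intro w hw h1 h2
    have hwv : dotp v w = (Pf.card : ℝ) + Mf.card :=
      heq w (fun i hi => h1 i (hy₀P i hi)) (fun i hi => h2 i (hy₀M i hi))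
    refine ⟨hw, fun z hz => ?_⟩
    show dotp v z ≤ dotp v w
    rw [hwv]
    exact hbound z hz
  · intro w hw i
    obtain ⟨hwY, hwopt⟩ := hw
    have hge : dotp v y₀ ≤ dotp v w := hwopt y₀ hy₀
    have hwv : dotp v w = (Pf.card : ℝ) + Mf.card :=
      le_antisymm (hbound w hwY) (by rw [← hy₀v]; exact hge)
    -- termwise equalities
    have hS1le : ∑ i ∈ Pf, colDot A i w ≤ (Pf.card : ℝ) := by
      calc ∑ i ∈ Pf, colDot A i w ≤ ∑ i ∈ Pf, (1:ℝ) := Finset.sum_le_sum (hPle w hwY)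
        _ = (Pf.card : ℝ) := by simp
    have hS2le : ∑ i ∈ Mf, (- colDot A i w) ≤ (Mf.card : ℝ) := by
      calc ∑ i ∈ Mf, (- colDot A i w) ≤ ∑ i ∈ Mf, (1:ℝ) := by
            apply Finset.sum_le_sum
            intro i hi
            linarith [hMle w hwY i hi]
        _ = (Mf.card : ℝ) := by simp
    have hsum : (∑ i ∈ Pf, colDot A i w) + (∑ i ∈ Mf, (- colDot A i w))
        = (Pf.card : ℝ) + Mf.card := by
      rw [hdot] at hwv
      rw [← hwv, Finset.sum_neg_distrib]
      ring
    have hS1 : ∑ i ∈ Pf, colDot A i w = ∑ i ∈ Pf, (1:ℝ) := by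
      rw [show ∑ i ∈ Pf, (1:ℝ) = (Pf.card : ℝ) by simp]
      linarith
    have hS2 : ∑ i ∈ Mf, (- colDot A i w) = ∑ i ∈ Mf, (1:ℝ) := by
      rw [show ∑ i ∈ Mf, (1:ℝ) = (Mf.card : ℝ) by simp]
      linarith
    have hP1 := (Finset.sum_eq_sum_iff_of_le (fun i hi => hPle w hwY i hi)).1 hS1
    have hM1 := (Finset.sum_eq_sum_iff_of_le (fun i hi => by
      linarith [hMle w hwY i hi] : ∀ i ∈ Mf, - colDot A i w ≤ (1:ℝ))).1 hS2
    constructor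
    · intro hy1
      have hiP : i ∈ Pf := by rw [hPf]; simp [hy1]
      exact hP1 i hiP
    · intro hy1
      have hiM : i ∈ Mf := by rw [hMf]; simp [hy1]
      have := hM1 i hiM
      linarith

end BP5
section BP6

open Filter Topology

variable {m n : ℕ} {A : Matrix (Fin m) (Fin n) ℝ}

lemma kkt_package {lam : ℝ} (hl : 0 < lam) {b : Fin m → ℝ} {x : Fin n → ℝ}
    (hx : x ∈ Sol A lam b) {y : Fin m → ℝ} (hy : y = lam⁻¹ • (b - A.mulVec x)) :
    (y ∈ Ydual A) ∧ (∀ i, resid A b x i = lam * colDot A i y) ∧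
    (∀ i, colDot A i y = 1 → 0 ≤ x i) ∧ (∀ i, colDot A i y = -1 → x i ≤ 0) ∧
    (∀ i, colDot A i y ≠ 1 → colDot A i y ≠ -1 → x i = 0) := by
  have hl0 : lam ≠ 0 := ne_of_gt hl
  have hcd : ∀ i, colDot A i y = lam⁻¹ * resid A b x i := by
    intro i
    rw [hy, colDot_smul, resid]
  have hres : ∀ i, resid A b x i = lam * colDot A i y := by
    intro i
    rw [hcd, ← mul_assoc, mul_inv_cancel₀ hl0, one_mul]
  refine ⟨?_, hres, ?_, ?_, ?_⟩
  · intro i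
    rw [hcd, abs_mul, abs_of_pos (inv_pos.2 hl)]
    calc lam⁻¹ * |resid A b x i| ≤ lam⁻¹ * lam :=
          mul_le_mul_of_nonneg_left (kkt_abs hl hx i) (inv_pos.2 hl).le
      _ = 1 := inv_mul_cancel₀ hl0
  · intro i h1
    by_contra hneg
    push_neg at hneg
    have := kkt_neg hl hx hneg
    rw [hres i, h1, mul_one] at this
    linarith
  · intro i h1
    by_contra hpos
    push_neg at hpos
    have := kkt_pos hl hx hpos
    rw [hres i, h1] at this
    nlinarith
  · intro i h1 h2
    rcases lt_trichotomy (x i) 0 with hc | hc | hc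
    · exfalso
      apply h2
      have h3 := kkt_neg hl hx hc
      rw [hres i] at h3
      have h4 : lam * colDot A i y = lam * (-1) := by linarith
      exact mul_left_cancel₀ hl0 h4
    · exact hc
    · exfalso
      apply h1
      have h3 := kkt_pos hl hx hc
      rw [hres i] at h3
      have h4 : lam * colDot A i y = lam * 1 := by linarith
      exact mul_left_cancel₀ hl0 h4

lemma cover_pos {lam : ℝ} (hl : 0 < lam) (b : Fin m → ℝ) :
    ∃ F : Set (Fin m → ℝ), (IsFaceOf (Ydual A) F ∧ F.Nonempty) ∧
      (lam, b) ∈ DFace A F := by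
  obtain ⟨x, hx⟩ := sol_nonempty_pos (A := A) hl b
  set y : Fin m → ℝ := lam⁻¹ • (b - A.mulVec x) with hy
  obtain ⟨hyY, hres, hy1, hym1, hy0⟩ := kkt_package hl hx hy
  obtain ⟨F, hface, hmem, hforce⟩ := face_from_dual y hyY
  have hyF : y ∈ F := hmem y hyY (fun _ h => h) (fun _ h => h)
  refine ⟨F, ⟨hface, ⟨y, hyF⟩⟩, ⟨(lam, b, x), ?_, rfl⟩⟩
  refine ⟨hl.le, ?_, ?_, ?_⟩
  · intro i hi
    have hcd : colDot A i y = 1 := hi y hyF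
    exact ⟨hy1 i hcd, by rw [hres i, hcd, mul_one]⟩
  · intro i hi
    obtain ⟨w, hwF, hw1, hw2⟩ := hi
    have hne1 : colDot A i y ≠ 1 := by
      intro hc
      have := (hforce w hwF i).1 hc
      linarith
    have hnem1 : colDot A i y ≠ -1 := by
      intro hc
      have := (hforce w hwF i).2 hc
      linarith
    exact ⟨hy0 i hne1 hnem1, kkt_abs hl hx i⟩
  · intro i hi
    have hcd : colDot A i y = -1 := hi y hyF
    exact ⟨hym1 i hcd, by rw [hres i, hcd, mul_neg_one]⟩

lemma cover_zero (hrank : A.rank = m) (b : Fin m → ℝ) :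
    ∃ F : Set (Fin m → ℝ), (IsFaceOf (Ydual A) F ∧ F.Nonempty) ∧
      (0, b) ∈ DFace A F := by
  classical
  obtain ⟨x₀, hx₀⟩ := rank_surjective hrank b
  set L : ℝ := l1 x₀ with hL
  set lam : ℕ → ℝ := fun k => ((k : ℝ) + 1)⁻¹ with hlam
  have hlam_pos : ∀ k, 0 < lam k := by
    intro k
    rw [hlam]
    positivity
  have hsol : ∀ k : ℕ, ∃ x, x ∈ Sol A (lam k) b := fun k =>
    sol_nonempty_pos (hlam_pos k) b
  choose xs hxs using hsol
  set ys : ℕ → (Fin m → ℝ) := fun k => (lam k)⁻¹ • (b - A.mulVec (xs k)) with hys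
  have hpack : ∀ k, (ys k ∈ Ydual A) ∧
      (∀ i, resid A b (xs k) i = lam k * colDot A i (ys k)) ∧
      (∀ i, colDot A i (ys k) = 1 → 0 ≤ xs k i) ∧
      (∀ i, colDot A i (ys k) = -1 → xs k i ≤ 0) ∧
      (∀ i, colDot A i (ys k) ≠ 1 → colDot A i (ys k) ≠ -1 → xs k i = 0) := by
    intro k
    exact kkt_package (hlam_pos k) (hxs k) rfl
  -- bounds
  have hfk : ∀ k, l1 (xs k) + 1/(2*lam k) * sqnorm (A.mulVec (xs k) - b) ≤ L := by
    intro k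
    have h := (sol_iff_pos (hlam_pos k) b (xs k)).1 (hxs k) x₀
    rw [hx₀] at h
    have hz : sqnorm (b - b) = 0 := by simp [sqnorm]
    rw [hz, mul_zero, add_zero] at h
    exact h
  have hl1b : ∀ k, l1 (xs k) ≤ L := by
    intro k
    have h1 : 0 ≤ 1/(2*lam k) * sqnorm (A.mulVec (xs k) - b) := by
      have := sqnorm_nonneg (A.mulVec (xs k) - b)
      have := hlam_pos k
      positivity
    linarith [hfk k]
  have hsqb : ∀ k, sqnorm (A.mulVec (xs k) - b) ≤ 2 * lam k * L := by
    intro k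
    have h1 := hfk k
    have h2 := l1_nonneg (xs k)
    have h3 : 1/(2*lam k) * sqnorm (A.mulVec (xs k) - b) ≤ L := by linarith
    have h4 := mul_le_mul_of_nonneg_left h3 (by linarith [hlam_pos k] : (0:ℝ) ≤ 2 * lam k)
    have h5 : 2 * lam k * (1/(2*lam k) * sqnorm (A.mulVec (xs k) - b))
        = sqnorm (A.mulVec (xs k) - b) := by
      have := hlam_pos k
      field_simp
    rw [h5] at h4
    exact h4
  -- pigeonhole
  set PM : ℕ → Set (Fin n) × Set (Fin n) := fun k =>
    ({i | colDot A i (ys k) = 1}, {i | colDot A i (ys k) = -1}) with hPM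
  obtain ⟨pm, hpm⟩ := Finite.exists_infinite_fiber PM
  have hSinf : (PM ⁻¹' {pm}).Infinite := Set.infinite_coe_iff.1 hpm
  set e := Set.Infinite.natEmbedding _ hSinf with he
  set g : ℕ → ℕ := fun j => (e j : ℕ) with hg
  have hg_mem : ∀ j, PM (g j) = pm := by
    intro j
    have h2 : PM (g j) ∈ ({pm} : Set _) := (e j).2
    exact Set.mem_singleton_iff.1 h2
  have hg_inj : Function.Injective g := by
    intro a b hab
    exact e.injective (Subtype.ext hab)
  have hg_tendsto : Tendsto g atTop atTop := by
    rw [← Nat.cofinite_eq_atTop]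
    exact hg_inj.tendsto_cofinite
  -- compactness
  obtain ⟨xbar, hxbarK, φ, hφmono, hφtend⟩ :=
    (sublevel_compact (n := n) L).tendsto_subseq (x := fun j => xs (g j))
      (fun j => hl1b (g j))
  set h : ℕ → ℕ := fun j => g (φ j) with hh
  have hh_tendsto : Tendsto h atTop atTop := hg_tendsto.comp hφmono.tendsto_atTop
  have hh_mem : ∀ j, PM (h j) = pm := fun j => hg_mem (φ j)
  have hxtend : Tendsto (fun j => xs (h j)) atTop (𝓝 xbar) := hφtend
  have hcoord : ∀ i, Tendsto (fun j => xs (h j) i) atTop (𝓝 (xbar i)) := by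
    intro i
    exact (tendsto_pi_nhds.1 hxtend) i
  -- lam (h j) → 0
  have hlamh : Tendsto (fun j => lam (h j)) atTop (𝓝 0) := by
    have h1 : Tendsto (fun k : ℕ => lam k) atTop (𝓝 0) := by
      have := tendsto_one_div_add_atTop_nhds_zero_nat (𝕜 := ℝ)
      simpa [hlam, one_div] using this
    exact h1.comp hh_tendsto
  -- limit: A xbar = b
  have hAxbar : A.mulVec xbar = b := by
    have hc : Tendsto (fun j => sqnorm (A.mulVec (xs (h j)) - b)) atTop
        (𝓝 (sqnorm (A.mulVec xbar - b))) :=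
      ((sqnorm_residual_continuous A b).tendsto xbar).comp hxtend
    have hub : Tendsto (fun j => 2 * lam (h j) * L) atTop (𝓝 0) := by
      have := (hlamh.const_mul 2).mul_const L
      simpa using this
    have hle : sqnorm (A.mulVec xbar - b) ≤ 0 :=
      le_of_tendsto_of_tendsto' hc hub (fun j => hsqb (h j))
    have := sqnorm_zero_iff hle
    funext k
    have := congrFun this k
    simp only [Pi.sub_apply, Pi.zero_apply] at this
    linarith
  -- the face
  have hyY0 : ys (h 0) ∈ Ydual A := (hpack (h 0)).1
  obtain ⟨F, hface, hmem, hforce⟩ := face_from_dual (ys (h 0)) hyY0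
  have hyF : ∀ j, ys (h j) ∈ F := by
    intro j
    apply hmem _ (hpack (h j)).1
    · intro i hi
      have h0 : i ∈ (PM (h 0)).1 := hi
      rw [hh_mem 0] at h0
      have : i ∈ (PM (h j)).1 := by rw [hh_mem j]; exact h0
      exact this
    · intro i hi
      have h0 : i ∈ (PM (h 0)).2 := hi
      rw [hh_mem 0] at h0
      have : i ∈ (PM (h j)).2 := by rw [hh_mem j]; exact h0
      exact this
  have hresid0 : ∀ i, resid A b xbar i = 0 := by
    intro i
    rw [resid, hAxbar, sub_self]
    simp [colDot]
  refine ⟨F, ⟨hface, ⟨ys (h 0), hyF 0⟩⟩, ⟨(0, b, xbar), ?_, rfl⟩⟩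
  refine ⟨le_refl 0, ?_, ?_, ?_⟩
  · intro i hi
    constructor
    · apply ge_of_tendsto' (hcoord i)
      intro j
      have hcd : colDot A i (ys (h j)) = 1 := hi _ (hyF j)
      exact (hpack (h j)).2.2.1 i hcd
    · rw [hresid0 i]
  · intro i hi
    obtain ⟨w, hwF, hw1, hw2⟩ := hi
    have hne1 : colDot A i (ys (h 0)) ≠ 1 := by
      intro hc
      have := (hforce w hwF i).1 hc
      linarith
    have hnem1 : colDot A i (ys (h 0)) ≠ -1 := by
      intro hc
      have := (hforce w hwF i).2 hc
      linarith
    have hzero : ∀ j, xs (h j) i = 0 := by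
      intro j
      apply (hpack (h j)).2.2.2.2 i
      · intro hc
        apply hne1
        have h1 : i ∈ (PM (h j)).1 := hc
        rw [hh_mem j] at h1
        have : i ∈ (PM (h 0)).1 := by rw [hh_mem 0]; exact h1
        exact this
      · intro hc
        apply hnem1
        have h1 : i ∈ (PM (h j)).2 := hc
        rw [hh_mem j] at h1
        have : i ∈ (PM (h 0)).2 := by rw [hh_mem 0]; exact h1
        exact this
    constructor
    · have : Tendsto (fun j => xs (h j) i) atTop (𝓝 0) := by
        have heq : (fun j => xs (h j) i) = fun _ => (0:ℝ) := funext hzero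
        rw [heq]
        exact tendsto_const_nhds
      exact tendsto_nhds_unique (hcoord i) this
    · rw [hresid0 i]
      simp
  · intro i hi
    constructor
    · apply le_of_tendsto' (hcoord i)
      intro j
      have hcd : colDot A i (ys (h j)) = -1 := hi _ (hyF j)
      exact (hpack (h j)).2.2.2.1 i hcd
    · rw [hresid0 i]
      simp

end BP6
section BP7

open Filter Topology

variable {m n : ℕ} {A : Matrix (Fin m) (Fin n) ℝ} {F F' : Set (Fin m → ℝ)}

lemma dface_unpack {q : ℝ × (Fin m → ℝ)} (h : q ∈ DFace A F) :
    ∃ x : Fin n → ℝ, (q.1, q.2, x) ∈ SFace A F := by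
  obtain ⟨p, hp, hpq⟩ := h
  have hpq' : (p.1, p.2.1) = q := hpq
  subst hpq'
  exact ⟨p.2.2, hp⟩

lemma sface_unpack {lam : ℝ} (hl : 0 < lam) (hF : IsFaceOf (Ydual A) F)
    (hFne : F.Nonempty) {b : Fin m → ℝ} {x : Fin n → ℝ} (hs : (lam, b, x) ∈ SFace A F)
    {y : Fin m → ℝ} (hy : y = lam⁻¹ • (b - A.mulVec x)) :
    y ∈ F ∧ (b - lam • y = A.mulVec x) ∧
    (∀ i ∈ Aplus A F, 0 ≤ x i) ∧ (∀ i ∈ Azero A F, x i = 0) ∧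
    (∀ i ∈ Aminus A F, x i ≤ 0) := by
  have hl0 : lam ≠ 0 := ne_of_gt hl
  obtain ⟨-, hsp, hs0, hsm⟩ := hs
  have hcd : ∀ i, colDot A i y = lam⁻¹ * resid A b x i := by
    intro i
    rw [hy, colDot_smul, resid]
  have hcdp : ∀ i ∈ Aplus A F, colDot A i y = 1 := by
    intro i hi
    rw [hcd, (hsp i hi).2, inv_mul_cancel₀ hl0]
  have hcdm : ∀ i ∈ Aminus A F, colDot A i y = -1 := by
    intro i hi
    rw [hcd, (hsm i hi).2]
    field_simp
  have hyY : y ∈ Ydual A := by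
    intro i
    rcases face_cover hF hFne i with hc | hc | hc
    · rw [hcdp i hc]; norm_num
    · rw [hcd, abs_mul, abs_of_pos (inv_pos.2 hl)]
      calc lam⁻¹ * |resid A b x i| ≤ lam⁻¹ * lam :=
            mul_le_mul_of_nonneg_left (hs0 i hc).2 (inv_pos.2 hl).le
        _ = 1 := inv_mul_cancel₀ hl0
    · rw [hcdm i hc]; norm_num
  have hyF : y ∈ F := by
    rw [face_eq_hat hF hFne]
    exact ⟨hyY, hcdp, hcdm⟩
  refine ⟨hyF, ?_, fun i hi => (hsp i hi).1, fun i hi => (hs0 i hi).1,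
    fun i hi => (hsm i hi).1⟩
  funext k
  rw [hy]
  simp only [Pi.sub_apply, Pi.smul_apply, smul_eq_mul]
  field_simp
  ring

lemma vi_core (hF' : IsFaceOf (Ydual A) F') (hF'ne : F'.Nonempty)
    {x' : Fin n → ℝ} (hxp : ∀ i ∈ Aplus A F', 0 ≤ x' i)
    (hx0 : ∀ i ∈ Azero A F', x' i = 0) (hxm : ∀ i ∈ Aminus A F', x' i ≤ 0)
    {w : Fin m → ℝ} (hwF' : w ∈ F') :
    ∀ z ∈ Ydual A, dotp (A.mulVec x') z - dotp (A.mulVec x') w ≤ 0 := by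
  intro z hz
  rw [dotp_mulVec, dotp_mulVec, ← Finset.sum_sub_distrib]
  apply Finset.sum_nonpos
  intro i _
  have hterm : x' i * colDot A i z - x' i * colDot A i w
      = x' i * (colDot A i z - colDot A i w) := by ring
  rw [hterm]
  rcases face_cover hF' hF'ne i with hc | hc | hc
  · have h1 := hxp i hc
    have h2 : colDot A i w = 1 := hc w hwF'
    have h3 := (abs_le.1 (hz i)).2
    rw [h2]
    nlinarith
  · rw [hx0 i hc, zero_mul]
  · have h1 := hxm i hc
    have h2 : colDot A i w = -1 := hc w hwF'
    have h3 := (abs_le.1 (hz i)).1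
    rw [h2]
    nlinarith

lemma vi_unique {lam : ℝ} (hl : 0 < lam) {b y y' : Fin m → ℝ}
    (h1 : ∀ z ∈ Ydual A, dotp (b - lam • y) z - dotp (b - lam • y) y ≤ 0)
    (h2 : ∀ z ∈ Ydual A, dotp (b - lam • y') z - dotp (b - lam • y') y' ≤ 0)
    (hyY : y ∈ Ydual A) (hy'Y : y' ∈ Ydual A) : y = y' := by
  have s1 := h1 y' hy'Y
  have s2 := h2 y hyY
  have key : (dotp (b - lam • y) y' - dotp (b - lam • y) y)
      + (dotp (b - lam • y') y - dotp (b - lam • y') y')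
      = lam * dotp (y' - y) (y' - y) := by
    simp only [dotp, Pi.sub_apply, Pi.smul_apply, smul_eq_mul, Finset.mul_sum,
      ← Finset.sum_add_distrib, ← Finset.sum_sub_distrib]
    apply Finset.sum_congr rfl
    intro k _
    ring
  have hd : lam * dotp (y' - y) (y' - y) ≤ 0 := by linarith
  have hd2 : dotp (y' - y) (y' - y) ≤ 0 := by
    nlinarith [dotp_self_nonneg (y' - y)]
  exact (eq_of_dotp_sub_self hd2).symm

lemma dotp_eq_on_face (hF : IsFaceOf (Ydual A) F) (hFne : F.Nonempty)
    {x : Fin n → ℝ} (hx0 : ∀ i ∈ Azero A F, x i = 0)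
    {w w' : Fin m → ℝ} (hw : w ∈ F) (hw' : w' ∈ F) :
    dotp (A.mulVec x) w = dotp (A.mulVec x) w' := by
  rw [dotp_mulVec, dotp_mulVec]
  apply Finset.sum_congr rfl
  intro i _
  rcases face_cover hF hFne i with hc | hc | hc
  · rw [hc w hw, hc w' hw']
  · rw [hx0 i hc, zero_mul, zero_mul]
  · rw [hc w hw, hc w' hw']

lemma face_dichotomy (hF : IsFaceOf (Ydual A) F) (hFne : F.Nonempty)
    (hF' : IsFaceOf (Ydual A) F') (hF'ne : F'.Nonempty) (hne : F ≠ F')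
    {y : Fin m → ℝ} (hyF : y ∈ F) (hyF' : y ∈ F') :
    (∃ i, i ∈ Azero A F ∧ (i ∈ Aplus A F' ∨ i ∈ Aminus A F')) ∨
    (∃ i, i ∈ Azero A F' ∧ (i ∈ Aplus A F ∨ i ∈ Aminus A F)) := by
  by_contra hcon
  push_neg at hcon
  obtain ⟨ha, hb⟩ := hcon
  have hsub : ∀ (G G' : Set (Fin m → ℝ)), IsFaceOf (Ydual A) G → G.Nonempty →
      IsFaceOf (Ydual A) G' → G'.Nonempty → y ∈ G → y ∈ G' →
      (∀ i, i ∈ Azero A G' → i ∉ Aplus A G ∧ i ∉ Aminus A G) →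
      (Aplus A G ⊆ Aplus A G' ∧ Aminus A G ⊆ Aminus A G') := by
    intro G G' hG hGne hG' hG'ne hyG hyG' hz
    constructor
    · intro i hi
      rcases face_cover hG' hG'ne i with hc | hc | hc
      · exact hc
      · exact absurd hi (hz i hc).1
      · exfalso
        have h1 := hi y hyG
        have h2 := hc y hyG'
        linarith
    · intro i hi
      rcases face_cover hG' hG'ne i with hc | hc | hc
      · exfalso
        have h1 := hi y hyG
        have h2 := hc y hyG'
        linarith
      · exact absurd hi (hz i hc).2
      · exact hc
  have h1 := hsub F F' hF hFne hF' hF'ne hyF hyF' hb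
  have h2 := hsub F' F hF' hF'ne hF hFne hyF' hyF ha
  apply hne
  rw [face_eq_hat hF hFne, face_eq_hat hF' hF'ne,
    Set.Subset.antisymm h1.1 h2.1, Set.Subset.antisymm h1.2 h2.2]

/-- perturbation of the `b`-component stays in a ball. -/
lemma perturb_mem {q : ℝ × (Fin m → ℝ)} {S : Set (ℝ × (Fin m → ℝ))} {ε : ℝ}
    (hball : Metric.ball q ε ⊆ S) (d : Fin m → ℝ) {t : ℝ}
    (ht : |t| * (1 + ∑ k, |d k|) < ε) :
    (q.1, q.2 + t • d) ∈ S := by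
  have hsum : (0:ℝ) ≤ ∑ k, |d k| := Finset.sum_nonneg fun k _ => abs_nonneg _
  have hε : 0 < ε := lt_of_le_of_lt (by positivity) ht
  apply hball
  rw [Metric.mem_ball, Prod.dist_eq]
  apply max_lt
  · simpa using hε
  · rw [dist_pi_lt_iff hε]
    intro k
    have h1 : dist (q.2 k + t * d k) (q.2 k) = |t| * |d k| := by
      rw [Real.dist_eq, add_sub_cancel_left, abs_mul]
    have h2 : |d k| ≤ 1 + ∑ j, |d j| := by
      have := Finset.single_le_sum (fun j _ => abs_nonneg (d j)) (Finset.mem_univ k)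
      linarith
    calc dist ((q.2 + t • d) k) (q.2 k) = |t| * |d k| := h1
      _ ≤ |t| * (1 + ∑ j, |d j|) := mul_le_mul_of_nonneg_left h2 (abs_nonneg t)
      _ < ε := ht

lemma disjoint_interiors (hF : IsFaceOf (Ydual A) F) (hFne : F.Nonempty)
    (hF' : IsFaceOf (Ydual A) F') (hF'ne : F'.Nonempty) (hne : F ≠ F') :
    interior (DFace A F) ∩ DFace A F' = ∅ := by
  rw [Set.eq_empty_iff_forall_notMem]
  rintro ⟨lam, b⟩ ⟨hint, hqF'⟩
  obtain ⟨ε, hε, hball⟩ := Metric.mem_nhds_iff.1 (mem_interior_iff_mem_nhds.1 hint)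
  have hqF : (lam, b) ∈ DFace A F := interior_subset hint
  obtain ⟨x, hx⟩ := dface_unpack hqF
  obtain ⟨x', hx'⟩ := dface_unpack hqF'
  have hlam0 : 0 ≤ lam := hx.1
  -- lam > 0
  have hlam : 0 < lam := by
    rcases eq_or_lt_of_le hlam0 with he | hl
    · exfalso
      have hmem : (lam - ε/2, b) ∈ DFace A F := by
        apply hball
        rw [Metric.mem_ball, Prod.dist_eq]
        apply max_lt
        · rw [Real.dist_eq]
          rw [show lam - ε/2 - lam = -(ε/2) by ring, abs_neg, abs_of_pos (by linarith)]
          linarith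
        · simpa using hε
      obtain ⟨xx, hxx⟩ := dface_unpack hmem
      have := hxx.1
      simp only at this
      linarith
    · exact hl
  have hlamne : lam ≠ 0 := ne_of_gt hlam
  -- the common dual point
  set ybar : Fin m → ℝ := lam⁻¹ • (b - A.mulVec x) with hybar
  set ybar' : Fin m → ℝ := lam⁻¹ • (b - A.mulVec x') with hybar'
  obtain ⟨hyF, hbeq0, hxp, hx0, hxm⟩ := sface_unpack hlam hF hFne hx hybar
  obtain ⟨hyF', hbeq0', hxp', hx0', hxm'⟩ := sface_unpack hlam hF' hF'ne hx' hybar'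
  clear_value ybar ybar'
  have hbeq : b - lam • ybar = A.mulVec x := hbeq0
  have hbeq' : b - lam • ybar' = A.mulVec x' := hbeq0'
  have hyY : ybar ∈ Ydual A := face_subset hF hyF
  have hy'Y : ybar' ∈ Ydual A := face_subset hF' hyF'
  have hyeq : ybar = ybar' := by
    apply vi_unique hlam (b := b) _ _ hyY hy'Y
    · intro z hz
      rw [hbeq]
      exact vi_core hF hFne hxp hx0 hxm hyF z hz
    · intro z hz
      rw [hbeq']
      exact vi_core hF' hF'ne hxp' hx0' hxm' hyF' z hz
  clear hbeq0 hbeq0'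
  have hyF'2 : ybar ∈ F' := hyeq ▸ hyF'
  -- dichotomy
  rcases face_dichotomy hF hFne hF' hF'ne hne hyF hyF'2 with
    ⟨i₀, hiz, hipm⟩ | ⟨i₀, hiz, hipm⟩
  · -- case (a): i₀ ∈ Azero F, active for F'
    obtain ⟨z₀, hz₀F, hz₀1, hz₀2⟩ := hiz
    set s : ℝ := colDot A i₀ ybar with hs
    clear_value s
    have hsval : s = 1 ∨ s = -1 := by
      rw [hs]
      rcases hipm with hc | hc
      · exact Or.inl (hc ybar hyF'2)
      · exact Or.inr (hc ybar hyF'2)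
    have hss : s * s = 1 := by rcases hsval with h | h <;> rw [h] <;> norm_num
    set c : Fin m → ℝ := fun k => A k i₀ with hc
    clear_value c
    set D : ℝ := 1 + ∑ k, |c k| with hD
    clear_value D
    have hDpos : 0 < D := by
      rw [hD]
      have : (0:ℝ) ≤ ∑ k, |c k| := Finset.sum_nonneg fun k _ => abs_nonneg _
      linarith
    set t : ℝ := min 1 (ε / (2 * D)) with ht
    clear_value t
    have htpos : 0 < t := by rw [ht]; exact lt_min one_pos (by positivity)
    have htb : |s * t| * D < ε := by
      have habs : |s * t| = t := by
        rw [abs_mul]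
        rcases hsval with h | h <;> rw [h] <;> simp [abs_of_pos htpos]
      rw [habs]
      have h1 : t ≤ ε / (2 * D) := by rw [ht]; exact min_le_right _ _
      have h2 : t * D ≤ (ε / (2 * D)) * D := mul_le_mul_of_nonneg_right h1 hDpos.le
      have h3 : (ε / (2 * D)) * D = ε / 2 := by field_simp
      rw [h3] at h2
      linarith
    have hmem : (lam, b + (s*t) • c) ∈ DFace A F := perturb_mem hball c (by rw [← hD]; exact htb)
    obtain ⟨xt, hxt⟩ := dface_unpack hmem
    set yt : Fin m → ℝ := lam⁻¹ • (b + (s*t) • c - A.mulVec xt) with hyt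
    obtain ⟨hytF, hbeqt0, hxtp, hxt0, hxtm⟩ := sface_unpack hlam hF hFne hxt hyt
    clear_value yt
    have hbeqt : b + (s*t) • c - lam • yt = A.mulVec xt := hbeqt0
    have hytY : yt ∈ Ydual A := face_subset hF hytF
    -- key identity
    have hdiff : A.mulVec xt - A.mulVec x = (s*t) • c + lam • (ybar - yt) := by
      rw [← hbeqt, ← hbeq]
      funext k
      simp only [Pi.add_apply, Pi.sub_apply, Pi.smul_apply, smul_eq_mul]
      ring
    have hE : dotp (A.mulVec xt - A.mulVec x) ybar - dotp (A.mulVec xt - A.mulVec x) yt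
        = 0 := by
      have hsubx : A.mulVec xt - A.mulVec x = A.mulVec (xt - x) := by
        funext k
        simp only [Pi.sub_apply, mulVec_apply', mul_sub, Finset.sum_sub_distrib]
      rw [hsubx]
      have := dotp_eq_on_face hF hFne (x := xt - x)
        (fun i hi => by simp [Pi.sub_apply, hxt0 i hi, hx0 i hi]) hyF hytF
      linarith [this]
    have hexpand : dotp (A.mulVec xt - A.mulVec x) ybar - dotp (A.mulVec xt - A.mulVec x) yt
        = (s*t) * (s - colDot A i₀ yt) + lam * dotp (ybar - yt) (ybar - yt) := by
      rw [← dotp_sub_right, hdiff, dotp_add_left, dotp_smul_left, dotp_smul_left]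
      have hcy : dotp c (ybar - yt) = s - colDot A i₀ yt := by
        rw [hs, dotp, colDot, colDot, ← Finset.sum_sub_distrib]
        apply Finset.sum_congr rfl
        intro k _
        simp only [Pi.sub_apply, hc]
        ring
      rw [hcy]
    have hterm1 : 0 ≤ (s*t) * (s - colDot A i₀ yt) := by
      have habs2 := abs_le.1 (hytY i₀)
      rcases hsval with h | h
      · rw [h]; nlinarith [habs2.2]
      · rw [h]; nlinarith [habs2.1]
    have hyteq : ybar = yt := by
      apply eq_of_dotp_sub_self
      by_contra hcon
      push_neg at hcon
      nlinarith [mul_pos hlam hcon, hterm1]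
    -- final contradiction
    have hfinal : A.mulVec (xt - x) = (s*t) • c := by
      have hsubx : A.mulVec (xt - x) = A.mulVec xt - A.mulVec x := by
        funext k
        simp only [Pi.sub_apply, mulVec_apply', mul_sub, Finset.sum_sub_distrib]
      rw [hsubx, hdiff, hyteq]
      funext k
      simp only [Pi.add_apply, Pi.smul_apply, Pi.sub_apply, smul_eq_mul]
      ring
    have heqd := dotp_eq_on_face hF hFne (x := xt - x)
      (fun i hi => by simp [Pi.sub_apply, hxt0 i hi, hx0 i hi]) hz₀F hyF
    rw [hfinal] at heqd
    have hz₀d : dotp ((s*t) • c) z₀ = (s*t) * colDot A i₀ z₀ := by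
      rw [dotp_smul_left]
      congr 1
      simp only [dotp, colDot, hc]
    have hyd : dotp ((s*t) • c) ybar = (s*t) * s := by
      rw [dotp_smul_left, hs]
      congr 1
      simp only [dotp, colDot, hc]
    rw [hz₀d, hyd] at heqd
    have hcz : colDot A i₀ z₀ = s := by
      have hst : s * t ≠ 0 := by
        rcases hsval with h | h <;> rw [h] <;> simp [ne_of_gt htpos, htpos.ne']
      exact mul_left_cancel₀ hst heqd
    rcases hsval with h | h
    · rw [h] at hcz; linarith
    · rw [h] at hcz; linarith
  · -- case (b): i₀ ∈ Azero F', active for F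
    obtain ⟨z₀, hz₀F', hz₀1, hz₀2⟩ := hiz
    set s : ℝ := colDot A i₀ ybar with hs
    clear_value s
    have hsval : s = 1 ∨ s = -1 := by
      rw [hs]
      rcases hipm with hc | hc
      · exact Or.inl (hc ybar hyF)
      · exact Or.inr (hc ybar hyF)
    set d : Fin m → ℝ := z₀ - ybar with hd
    clear_value d
    set D : ℝ := 1 + ∑ k, |(lam • d) k| with hD
    clear_value D
    have hDpos : 0 < D := by
      rw [hD]
      have : (0:ℝ) ≤ ∑ k, |(lam • d) k| := Finset.sum_nonneg fun k _ => abs_nonneg _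
      linarith
    set t : ℝ := min 1 (ε / (2 * D)) with ht
    clear_value t
    have htpos : 0 < t := by rw [ht]; exact lt_min one_pos (by positivity)
    have ht1 : t ≤ 1 := by rw [ht]; exact min_le_left _ _
    have htb : |t| * D < ε := by
      rw [abs_of_pos htpos]
      have h1 : t ≤ ε / (2 * D) := by rw [ht]; exact min_le_right _ _
      have h2 : t * D ≤ (ε / (2 * D)) * D := mul_le_mul_of_nonneg_right h1 hDpos.le
      have h3 : (ε / (2 * D)) * D = ε / 2 := by field_simp
      rw [h3] at h2
      linarith
    have hmem : (lam, b + t • (lam • d)) ∈ DFace A F :=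
      perturb_mem hball (lam • d) (by rw [← hD]; exact htb)
    obtain ⟨xt, hxt⟩ := dface_unpack hmem
    set yt : Fin m → ℝ := lam⁻¹ • (b + t • (lam • d) - A.mulVec xt) with hyt
    obtain ⟨hytF, hbeqt0, hxtp, hxt0, hxtm⟩ := sface_unpack hlam hF hFne hxt hyt
    clear_value yt
    have hbeqt : b + t • (lam • d) - lam • yt = A.mulVec xt := hbeqt0
    have hytY : yt ∈ Ydual A := face_subset hF hytF
    -- the candidate projection: yhat = ybar + t • d ∈ F'
    set yhat : Fin m → ℝ := ybar + t • d with hyhat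
    clear_value yhat
    have hyhatF' : yhat ∈ F' := by
      have hcomb := (face_convex hF') hyF'2 hz₀F'
        (by linarith : (0:ℝ) ≤ 1 - t) htpos.le (by ring)
      have : (1 - t) • ybar + t • z₀ = yhat := by
        funext k
        simp only [Pi.add_apply, Pi.smul_apply, Pi.sub_apply, smul_eq_mul, hyhat, hd]
        ring
      rwa [this] at hcomb
    have hyhatY : yhat ∈ Ydual A := face_subset hF' hyhatF'
    -- VI for yhat at perturbed b
    have hbeqhat : b + t • (lam • d) - lam • yhat = A.mulVec x' := by
      rw [← hbeq', ← hyeq]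
      funext k
      simp only [hyhat, hd, Pi.add_apply, Pi.sub_apply, Pi.smul_apply, smul_eq_mul]
      ring
    have hytyhat : yt = yhat := by
      apply vi_unique hlam (b := b + t • (lam • d)) _ _ hytY hyhatY
      · intro z hz
        rw [hbeqt]
        exact vi_core hF hFne hxtp hxt0 hxtm hytF z hz
      · intro z hz
        rw [hbeqhat]
        exact vi_core hF' hF'ne hxp' hx0' hxm' hyhatF' z hz
    -- contradiction at coordinate i₀
    have hcyt : colDot A i₀ yt = s := by
      rw [hs]
      rcases hipm with hcc | hcc
      · rw [hcc yt hytF, hcc ybar hyF]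
      · rw [hcc yt hytF, hcc ybar hyF]
    have hcyhat : colDot A i₀ yhat = s + t * (colDot A i₀ z₀ - s) := by
      rw [hyhat, colDot_add, colDot_smul, hd, colDot_sub, hs]
    rw [hytyhat, hcyhat] at hcyt
    have : t * (colDot A i₀ z₀ - s) = 0 := by linarith
    have hz₀s : colDot A i₀ z₀ = s := by
      rcases mul_eq_zero.1 this with h | h
      · exact absurd h htpos.ne'
      · linarith
    rcases hsval with h | h
    · rw [h] at hz₀s; linarith
    · rw [h] at hz₀s; linarith

end BP7
theorem stmt13 {m n : ℕ} (A : Matrix (Fin m) (Fin n) ℝ) (hrank : A.rank = m) :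
    ({q : ℝ × (Fin m → ℝ) | 0 ≤ q.1 ∧ (Sol A q.1 q.2).Nonempty} = {q | 0 ≤ q.1}) ∧
    ({q : ℝ × (Fin m → ℝ) | 0 ≤ q.1} =
      ⋃ F ∈ {F : Set (Fin m → ℝ) | IsFaceOf (Ydual A) F ∧ F.Nonempty}, DFace A F) ∧
    (∀ F F' : Set (Fin m → ℝ), IsFaceOf (Ydual A) F → F.Nonempty →
      IsFaceOf (Ydual A) F' → F'.Nonempty → F ≠ F' →
        interior (DFace A F) ∩ DFace A F' = ∅) := by
  refine ⟨?_, ?_, ?_⟩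
  · ext ⟨lam, b⟩
    simp only [Set.mem_setOf_eq]
    constructor
    · exact fun h => h.1
    · intro h
      refine ⟨h, ?_⟩
      rcases eq_or_lt_of_le h with he | hl
      · rw [← he]
        exact sol_nonempty_zero hrank b
      · exact sol_nonempty_pos hl b
  · ext ⟨lam, b⟩
    simp only [Set.mem_setOf_eq, Set.mem_iUnion, exists_prop]
    constructor
    · intro h
      rcases eq_or_lt_of_le h with he | hl
      · obtain ⟨F, hF, hmem⟩ := cover_zero hrank b
        refine ⟨F, hF, ?_⟩
        rw [← he]
        exact hmem
      · obtain ⟨F, hF, hmem⟩ := cover_pos hl b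
        exact ⟨F, hF, hmem⟩
    · rintro ⟨F, hF, hmem⟩
      obtain ⟨x, hx⟩ := dface_unpack hmem
      exact hx.1
  · exact fun F F' h1 h2 h3 h4 h5 => disjoint_interiors h1 h2 h3 h4 h5
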